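/- arXiv:2106.03349 — 2 statements merged into one kernel-verified Lean document; each statement's English description precedes it below -/
import Mathlib

section
/- Let k ≥ 1 and D ≥ 0, let T̃ be the complete k-ary tree of depth D with root λ, with parameters g_u ∈ [0,1] on the nodes and g_u = 0 for every node at depth D. Fix any node s of T̃. Then the sum, over all full subtrees T of T̃ that have s as a leaf node, of the weight ∏_{u ∈ L^T} (1 − g_u) · ∏_{u' ∈ I^T} g_{u'} equals (1 − g_s) · ∏_{s' ∈ A_s} g_{s'}, where A_s is the set of (proper) ancestor nodes of s in T̃ (A_λ is the empty set). -/
/-!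
Read `weight g u T` as the probability that a branching process started at `u`, in which a node
`v` stops with probability `1 - g v` and otherwise spawns its `k` children, grows exactly `T`.
Splitting on whether the root stops, and using that the children grow independently, the total
weight of all full subtrees is `1`: the process stops surely because `g` vanishes on the bottom
level. A subtree has `s = i :: s'` as a leaf iff its root branches and the subtree at child `i`
has `s` as a leaf; the other `k - 1` children contribute total weight `1`, so by induction on `s`
the sum collects one factor `g` per proper ancestor of `s` and a final factor `1 - g s`.
-/

inductive FullTree (k : ℕ) : ℕ → Type where
  | leaf {D : ℕ} : FullTree k D
  | node {D : ℕ} (c : Fin k → FullTree k D) : FullTree k (D + 1)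

namespace FullTree

def equivZero (k : ℕ) : FullTree k 0 ≃ Unit where
  toFun _ := ()
  invFun _ := .leaf
  left_inv t := by cases t; rfl
  right_inv _ := rfl

def equivSucc (k D : ℕ) : FullTree k (D + 1) ≃ Option (Fin k → FullTree k D) where
  toFun t := match t with
    | .leaf => none
    | .node c => some c
  invFun o := match o with
    | none => .leaf
    | some c => .node c
  left_inv t := by cases t <;> rfl
  right_inv o := by cases o <;> rfl

instance instFintype (k : ℕ) : (D : ℕ) → Fintype (FullTree k D)
  | 0 => Fintype.ofEquiv Unit (equivZero k).symm
  | (D + 1) => letI := instFintype k D; Fintype.ofEquiv _ (equivSucc k D).symm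

noncomputable instance (k D : ℕ) : DecidableEq (FullTree k D) := Classical.decEq _

/-- The set of (paths to) leaf nodes of a full subtree whose root has path `u`. -/
def leaves {k : ℕ} : {D : ℕ} → List (Fin k) → FullTree k D → Finset (List (Fin k))
  | _, u, .leaf => {u}
  | _, u, .node c => Finset.univ.biUnion fun i => leaves (u ++ [i]) (c i)

/-- The set of (paths to) inner nodes of a full subtree whose root has path `u`. -/
def inners {k : ℕ} : {D : ℕ} → List (Fin k) → FullTree k D → Finset (List (Fin k))
  | _, _, .leaf => ∅
  | _, u, .node c => insert u (Finset.univ.biUnion fun i => inners (u ++ [i]) (c i))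

/-- The weight ∏_{u ∈ L^T} (1 - g u) * ∏_{u ∈ I^T} g u of a full subtree rooted at path `u`. -/
noncomputable def weight {k D : ℕ} (g : List (Fin k) → ℝ) (u : List (Fin k))
    (T : FullTree k D) : ℝ :=
  (∏ s ∈ leaves u T, (1 - g s)) * ∏ s ∈ inners u T, g s

end FullTree

theorem List.prod_map_dropLast_inits_cons {α M : Type*} [CommMonoid M] (f : List α → M)
    (a : α) (l : List α) :
    ((a :: l).inits.dropLast.map f).prod
      = f [] * (l.inits.dropLast.map fun p => f (a :: p)).prod := by
  rw [List.inits_cons, List.dropLast_cons_of_ne_nil (List.ne_nil_of_length_pos (by simp)),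
    ← List.map_dropLast]
  simp [Function.comp_def]

theorem List.eq_of_append_singleton_prefix {α : Type*} {u v : List α} {i j : α}
    (hi : u ++ [i] <+: v) (hj : u ++ [j] <+: v) : i = j := by
  have h : u ++ [i] = u ++ [j] := by
    rcases List.prefix_or_prefix_of_prefix hi hj with h | h
    · exact h.eq_of_length (by simp)
    · exact (h.eq_of_length (by simp)).symm
  simpa using h

theorem List.pairwiseDisjoint_of_append_singleton_prefix {α : Type*} {u : List α}
    {s : Set α} {S : α → Finset (List α)} (hS : ∀ i, ∀ v ∈ S i, u ++ [i] <+: v) :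
    s.PairwiseDisjoint S :=
  fun i _ j _ hij => Finset.disjoint_left.2 fun v hvi hvj =>
    hij (List.eq_of_append_singleton_prefix (hS i v hvi) (hS j v hvj))

theorem Fintype.sum_filter_apply_prod {ι κ R : Type*} [Fintype ι] [DecidableEq ι] [Fintype κ]
    [CommSemiring R] (i : ι) (p : κ → Prop) [DecidablePred p] (f : ι → κ → R)
    (hf : ∀ j ≠ i, ∑ x, f j x = 1) :
    ∑ c : ι → κ with p (c i), ∏ j, f j (c j) = ∑ x with p x, f i x := by
  have hfilter : ({c : ι → κ | p (c i)} : Finset _) =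
      Fintype.piFinset (Function.update (fun _ => .univ) i ({x | p x} : Finset κ)) := by
    ext c
    simp only [Finset.mem_filter, Finset.mem_univ, true_and, Fintype.mem_piFinset]
    refine ⟨fun h j => ?_, fun h => by simpa using h i⟩
    by_cases hj : j = i
    · subst hj; simpa using h
    · simp [hj]
  rw [hfilter, ← Finset.prod_univ_sum,
    Fintype.prod_eq_single i fun j hj => by simpa [hj] using hf j hj]
  simp

namespace FullTree

variable {k : ℕ}

@[simp] theorem leaves_leaf {d : ℕ} (u : List (Fin k)) :
    leaves u (.leaf : FullTree k d) = {u} := rfl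

@[simp] theorem leaves_node {d : ℕ} (u : List (Fin k)) (c : Fin k → FullTree k d) :
    leaves u (.node c) = Finset.univ.biUnion fun i => leaves (u ++ [i]) (c i) := rfl

@[simp] theorem inners_leaf {d : ℕ} (u : List (Fin k)) :
    inners u (.leaf : FullTree k d) = ∅ := rfl

@[simp] theorem inners_node {d : ℕ} (u : List (Fin k)) (c : Fin k → FullTree k d) :
    inners u (.node c) = insert u (Finset.univ.biUnion fun i => inners (u ++ [i]) (c i)) := rfl

theorem prefix_of_mem_leaves {d : ℕ} {u v : List (Fin k)} {T : FullTree k d}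
    (h : v ∈ leaves u T) : u <+: v := by
  induction T generalizing u with
  | leaf => simp_all
  | node c ih =>
    obtain ⟨i, -, hi⟩ := Finset.mem_biUnion.1 h
    exact (List.prefix_append u [i]).trans (ih i hi)

theorem prefix_of_mem_inners {d : ℕ} {u v : List (Fin k)} {T : FullTree k d}
    (h : v ∈ inners u T) : u <+: v := by
  induction T generalizing u with
  | leaf => simp at h
  | node c ih =>
    rcases Finset.mem_insert.1 h with rfl | h
    · exact List.prefix_rfl
    obtain ⟨i, -, hi⟩ := Finset.mem_biUnion.1 h
    exact (List.prefix_append u [i]).trans (ih i hi)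

theorem mem_leaves_self_iff {d : ℕ} (u : List (Fin k)) (T : FullTree k d) :
    u ∈ leaves u T ↔ T = .leaf := by
  cases T with
  | leaf => simp
  | node c =>
    simp only [leaves_node, Finset.mem_biUnion, Finset.mem_univ, true_and, reduceCtorEq,
      iff_false, not_exists]
    intro i hi
    simpa using (prefix_of_mem_leaves hi).length_le

theorem filter_mem_leaves_self {d : ℕ} (u : List (Fin k)) :
    ({T : FullTree k d | u ∈ leaves u T} : Finset _) = {.leaf} := by
  ext T
  simp [mem_leaves_self_iff]

theorem mem_leaves_node_iff {d : ℕ} {u v : List (Fin k)} {i : Fin k}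
    (c : Fin k → FullTree k d) (hv : u ++ [i] <+: v) :
    v ∈ leaves u (.node c) ↔ v ∈ leaves (u ++ [i]) (c i) := by
  refine ⟨fun h => ?_, fun h => Finset.mem_biUnion.2 ⟨i, Finset.mem_univ i, h⟩⟩
  obtain ⟨j, -, hj⟩ := Finset.mem_biUnion.1 h
  rwa [← List.eq_of_append_singleton_prefix (prefix_of_mem_leaves hj) hv]

theorem weight_leaf {d : ℕ} (g : List (Fin k) → ℝ) (u : List (Fin k)) :
    weight g u (.leaf : FullTree k d) = 1 - g u := by
  simp [weight]

theorem weight_node {d : ℕ} (g : List (Fin k) → ℝ) (u : List (Fin k))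
    (c : Fin k → FullTree k d) :
    weight g u (.node c) = g u * ∏ i, weight g (u ++ [i]) (c i) := by
  have hu : u ∉ Finset.univ.biUnion fun i => inners (u ++ [i]) (c i) := fun h => by
    obtain ⟨i, -, hi⟩ := Finset.mem_biUnion.1 h
    simpa using (prefix_of_mem_inners hi).length_le
  unfold weight
  rw [leaves_node, inners_node, Finset.prod_insert hu,
    Finset.prod_biUnion
      (List.pairwiseDisjoint_of_append_singleton_prefix fun _ _ => prefix_of_mem_leaves),
    Finset.prod_biUnion
      (List.pairwiseDisjoint_of_append_singleton_prefix fun _ _ => prefix_of_mem_inners),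
    Finset.prod_mul_distrib]
  ring

theorem sum_zero {M : Type*} [AddCommMonoid M] (f : FullTree k 0 → M) :
    ∑ T, f T = f .leaf := by
  rw [← (equivZero k).symm.sum_comp, Fintype.sum_unique]
  rfl

theorem sum_succ {M : Type*} [AddCommMonoid M] {d : ℕ} (f : FullTree k (d + 1) → M) :
    ∑ T, f T = f .leaf + ∑ c : Fin k → FullTree k d, f (.node c) := by
  rw [← (equivSucc k d).symm.sum_comp, Fintype.sum_option]
  rfl

theorem sum_weight_eq_one {g : List (Fin k) → ℝ} {d : ℕ} {u : List (Fin k)}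
    (hg : ∀ v : List (Fin k), v.length = u.length + d → g v = 0) :
    ∑ T : FullTree k d, weight g u T = 1 := by
  induction d generalizing u with
  | zero => simp [sum_zero, weight_leaf, hg u]
  | succ d ih =>
    have hchild (i : Fin k) : ∑ T : FullTree k d, weight g (u ++ [i]) T = 1 :=
      ih fun v hv => hg v (by simp [hv]; omega)
    simp only [sum_succ, weight_leaf, weight_node, ← Finset.mul_sum, ← Fintype.prod_sum, hchild]
    simp

theorem sum_weight_filter_mem_leaves {g : List (Fin k) → ℝ} {d : ℕ} {u s : List (Fin k)}
    (hg : ∀ v : List (Fin k), v.length = u.length + d → g v = 0) (hs : s.length ≤ d) :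
    ∑ T : FullTree k d with u ++ s ∈ leaves u T, weight g u T
      = (1 - g (u ++ s)) * (s.inits.dropLast.map fun p => g (u ++ p)).prod := by
  induction s generalizing u d with
  | nil => simp [filter_mem_leaves_self, weight_leaf]
  | cons i s ih =>
    obtain ⟨d, rfl⟩ : ∃ d', d = d' + 1 := Nat.exists_eq_add_one.2 (by simp at hs; omega)
    have hprefix : u ++ [i] <+: u ++ i :: s := ⟨s, by simp⟩
    have hchild (j : Fin k) : ∀ v : List (Fin k), v.length = (u ++ [j]).length + d → g v = 0 :=
      fun v hv => hg v (by simp [hv]; omega)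
    rw [Finset.sum_filter, sum_succ, leaves_leaf, if_neg (by simp)]
    simp only [mem_leaves_node_iff _ hprefix, ← Finset.sum_filter, weight_node,
      ← Finset.mul_sum]
    rw [Fintype.sum_filter_apply_prod i (fun T => u ++ i :: s ∈ leaves (u ++ [i]) T)
        (fun j T => weight g (u ++ [j]) T) fun j _ => sum_weight_eq_one (hchild j),
      List.prod_map_dropLast_inits_cons]
    have hsub := ih (hchild i) (by simpa using hs)
    simp only [List.append_assoc, List.singleton_append] at hsub
    rw [hsub, List.append_nil]
    ring

end FullTree

theorem stmt2_general (k D : ℕ) (g : List (Fin k) → ℝ)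
    (hgD : ∀ u : List (Fin k), u.length = D → g u = 0)
    (s : List (Fin k)) (hs : s.length ≤ D) :
    ∑ T ∈ Finset.univ.filter (fun T : FullTree k D => s ∈ FullTree.leaves [] T),
        FullTree.weight g [] T
      = (1 - g s) * (s.inits.dropLast.map g).prod := by
  simpa using FullTree.sum_weight_filter_mem_leaves (u := []) (by simpa using hgD) hs

/-- Nodes of the complete `k`-ary tree of depth `D` are encoded by their paths
from the root `λ = []`, so `A_s` (the proper ancestors of `s`) is the list `s.inits.dropLast`
of proper prefixes of `s`.  The sum of the weights of all full subtrees having `s` as a leaf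
equals `(1 - g s) * ∏_{s' ∈ A_s} g s'`. -/
theorem stmt2 (k D : ℕ) (hk : 1 ≤ k) (g : List (Fin k) → ℝ)
    (hg : ∀ u : List (Fin k), u.length ≤ D → g u ∈ Set.Icc (0 : ℝ) 1)
    (hgD : ∀ u : List (Fin k), u.length = D → g u = 0)
    (s : List (Fin k)) (hs : s.length ≤ D) :
    ∑ T ∈ Finset.univ.filter (fun T : FullTree k D => s ∈ FullTree.leaves [] T),
        FullTree.weight g [] T
      = (1 - g s) * (s.inits.dropLast.map g).prod :=
  stmt2_general k D g hgD s hs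
end

section
/- In the setting of the quadtree mixture algorithm, fix k ≥ 0 and let r be any block on the path S_k of blocks containing pixel k. Then the one-step update satisfies the identity (1 − g_{r|k}) · ∏_{s ∈ A_r} g_{s|k} = (q̃(v_k | v^{k−1}, r) / q(v_k | v^{k−1}, s_λ)) · (1 − g_{r|k−1}) · ∏_{s ∈ A_r} g_{s|k−1}, where A_r is the set of proper ancestors of r; this holds both when |r| = 1 and when |r| > 1. -/
namespace FullTree

/-- Follow the path `p` down the full subtree `T` (whose root has path `u`) until a leaf of
`T` is reached; returns the path of that leaf.  For a pixel `p` (a path of full length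
`dmax`), `leafOf [] m p` is the unique leaf block `s_m` of `m` containing the pixel `p`. -/
def leafOf {k : ℕ} : {D : ℕ} → List (Fin k) → FullTree k D → List (Fin k) → List (Fin k)
  | _, u, .leaf, _ => u
  | _, u, .node _, [] => u
  | _, u, .node c, i :: p => leafOf (u ++ [i]) (c i) p

end FullTree

/-- The likelihood `p(v^{t-1} | m) = ∏_{i < t} q̃(v_i | v^{i-1}, s_m(i))` of the first `t`
pixel values under model `m`, where `qt i s x = q̃(x | v^{i-1}, s)` is the per-block
predictive pmf and `s_m(i)` the unique leaf of `m` containing pixel `i`. -/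
noncomputable def like (dmax : ℕ) {V : Type} (qt : ℕ → List (Fin 4) → V → ℝ)
    (v : ℕ → V) (pix : ℕ → List (Fin 4)) (m : FullTree 4 dmax) (t : ℕ) : ℝ :=
  ∏ i ∈ Finset.range t, qt i (FullTree.leafOf [] m (pix i)) (v i)

/-- `Qd dmax qt v pix G t j` is the recursively mixed coding probability
`q(v_t | v^{t-1}, s)` at the block `s = (pix t).take (dmax - j)` on the path `S_t` of blocks
containing pixel `t` (`j` is the distance from `s` down to the singleton block of `S_t`),
computed with the current weights `G = g_{·|t-1}`:
`q = q̃` at singleton blocks and `q = (1 - g_{s|t-1}) q̃ + g_{s|t-1} q(child)` otherwise. -/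
noncomputable def Qd (dmax : ℕ) {V : Type} (qt : ℕ → List (Fin 4) → V → ℝ)
    (v : ℕ → V) (pix : ℕ → List (Fin 4)) (G : List (Fin 4) → ℝ) (t : ℕ) : ℕ → ℝ
  | 0 => qt t ((pix t).take dmax) (v t)
  | j + 1 =>
    (1 - G ((pix t).take (dmax - (j + 1)))) * qt t ((pix t).take (dmax - (j + 1))) (v t)
      + G ((pix t).take (dmax - (j + 1))) * Qd dmax qt v pix G t j

/-- One step of the weight update: `g_{s|t} = g_{s|t-1}` if `s ∉ S_t` or `|s| = 1`
(`s ∈ S_t` iff `s` is a prefix of the pixel path `pix t`; `|s| = 1` iff `s.length = dmax`),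
and `g_{s|t} = g_{s|t-1} · q(v_t | v^{t-1}, s_child) / q(v_t | v^{t-1}, s)` otherwise. -/
noncomputable def Gnext (dmax : ℕ) {V : Type} (qt : ℕ → List (Fin 4) → V → ℝ)
    (v : ℕ → V) (pix : ℕ → List (Fin 4)) (G : List (Fin 4) → ℝ) (t : ℕ)
    (s : List (Fin 4)) : ℝ :=
  if s <+: pix t ∧ s.length < dmax then
    G s * Qd dmax qt v pix G t (dmax - s.length - 1) / Qd dmax qt v pix G t (dmax - s.length)
  else G s

/-- `GT dmax qt v pix g t s = g_{s|t-1}`: the sequentially updated weights, with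
`GT ... 0 s = g_{s|-1} = g s`. -/
noncomputable def GT (dmax : ℕ) {V : Type} (qt : ℕ → List (Fin 4) → V → ℝ)
    (v : ℕ → V) (pix : ℕ → List (Fin 4)) (g : List (Fin 4) → ℝ) : ℕ → List (Fin 4) → ℝ
  | 0 => g
  | t + 1 => Gnext dmax qt v pix (GT dmax qt v pix g t) t

/-!
For `s ∈ S_k` with child `s'` on `S_k`, the update multiplies `g_s` by `q(s') / q(s)`, so over
the proper ancestors of `r` the product of the updated weights telescopes to
`q(r) / q(s_λ)` times the old product. The recursion `q(r) = (1 - g_r) q̃(r) + g_r q(r')` gives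
`(1 - g_{r|k}) q(r) = (1 - g_{r|k-1}) q̃(r)`, which also holds at a singleton block, where the
weight is not updated and `q = q̃`. The weights stay in `[0, 1]`, so all the `q` are positive.
-/

theorem List.prod_map_dropLast_inits {α M : Type*} [CommMonoid M] (f : List α → M)
    (l : List α) :
    (l.inits.dropLast.map f).prod = ∏ j ∈ Finset.range l.length, f (l.take j) := by
  induction l generalizing f with
  | nil => simp
  | cons a l ih =>
    rw [List.inits_cons, List.dropLast_cons_of_ne_nil (by cases l <;> simp), List.map_cons,
      List.prod_cons, ← List.map_dropLast, List.map_map, ih, List.length_cons,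
      Finset.prod_range_succ']
    simp [mul_comm]

theorem List.prod_map_dropLast_inits_take {α M : Type*} [CommMonoid M] (f : List α → M)
    {l : List α} {d : ℕ} (hd : d ≤ l.length) :
    ((l.take d).inits.dropLast.map f).prod = ∏ j ∈ Finset.range d, f (l.take j) := by
  rw [List.prod_map_dropLast_inits, List.length_take_of_le hd]
  refine Finset.prod_congr rfl fun j hj => ?_
  rw [List.take_take, min_eq_left (Finset.mem_range.mp hj).le]

section OneStep

variable {dmax : ℕ} {V : Type} {qt : ℕ → List (Fin 4) → V → ℝ} {v : ℕ → V}
  {pix : ℕ → List (Fin 4)} {G : List (Fin 4) → ℝ} {t : ℕ}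

theorem Qd_sub_length_of_prefix {s : List (Fin 4)} (hpre : s <+: pix t)
    (hlen : s.length < dmax) :
    Qd dmax qt v pix G t (dmax - s.length)
      = (1 - G s) * qt t s (v t) + G s * Qd dmax qt v pix G t (dmax - s.length - 1) := by
  obtain ⟨j, hj⟩ : ∃ j, dmax - s.length = j + 1 := ⟨dmax - s.length - 1, by omega⟩
  rw [show dmax - s.length - 1 = j by omega, hj, Qd, show dmax - (j + 1) = s.length by omega,
    ← List.prefix_iff_eq_take.mp hpre]

theorem Qd_pos (hq : ∀ s, 0 < qt t s (v t))
    (hG : ∀ s : List (Fin 4), s.length ≤ dmax → G s ∈ Set.Icc (0 : ℝ) 1) (j : ℕ) :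
    0 < Qd dmax qt v pix G t j := by
  induction j with
  | zero => exact hq _
  | succ j ih =>
    obtain ⟨h0, h1⟩ := hG ((pix t).take (dmax - (j + 1))) (by simp)
    rw [Qd]
    simpa only [smul_eq_mul, Set.mem_Ioi] using
      (convex_Ioi (0 : ℝ)) (hq _) ih (sub_nonneg.2 h1) h0 (sub_add_cancel 1 _)

theorem Gnext_mem_Icc (hq : ∀ s, 0 < qt t s (v t))
    (hG : ∀ s : List (Fin 4), s.length ≤ dmax → G s ∈ Set.Icc (0 : ℝ) 1)
    {s : List (Fin 4)} (hs : s.length ≤ dmax) :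
    Gnext dmax qt v pix G t s ∈ Set.Icc (0 : ℝ) 1 := by
  unfold Gnext
  split_ifs with h
  · obtain ⟨hpre, hlen⟩ := h
    obtain ⟨h0, h1⟩ := hG s hs
    have hQ : 0 < Qd dmax qt v pix G t (dmax - s.length) := Qd_pos hq hG _
    have hQ' : 0 < Qd dmax qt v pix G t (dmax - s.length - 1) := Qd_pos hq hG _
    refine ⟨by positivity, (div_le_one hQ).2 ?_⟩
    rw [Qd_sub_length_of_prefix hpre hlen]
    nlinarith [hq s]
  · exact hG s hs

theorem Gnext_of_prefix {s : List (Fin 4)} (hpre : s <+: pix t) (hlen : s.length < dmax) :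
    Gnext dmax qt v pix G t s
      = G s * Qd dmax qt v pix G t (dmax - s.length - 1)
          / Qd dmax qt v pix G t (dmax - s.length) :=
  if_pos ⟨hpre, hlen⟩

theorem one_sub_Gnext_mul_Qd (hq : ∀ s, 0 < qt t s (v t))
    (hG : ∀ s : List (Fin 4), s.length ≤ dmax → G s ∈ Set.Icc (0 : ℝ) 1)
    {s : List (Fin 4)} (hpre : s <+: pix t) (hs : s.length ≤ dmax) :
    (1 - Gnext dmax qt v pix G t s) * Qd dmax qt v pix G t (dmax - s.length)
      = (1 - G s) * qt t s (v t) := by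
  rcases hs.lt_or_eq with hlt | heq
  · have hQ : Qd dmax qt v pix G t (dmax - s.length) ≠ 0 := (Qd_pos hq hG _).ne'
    rw [Gnext_of_prefix hpre hlt, sub_mul, div_mul_cancel₀ _ hQ, one_mul,
      Qd_sub_length_of_prefix hpre hlt]
    ring
  · have hs_eq : s = (pix t).take dmax := heq ▸ List.prefix_iff_eq_take.mp hpre
    rw [Gnext, if_neg fun h => h.2.ne heq, heq, Nat.sub_self, Qd, ← hs_eq]

theorem Qd_mul_prod_Gnext_take (hq : ∀ s, 0 < qt t s (v t))
    (hG : ∀ s : List (Fin 4), s.length ≤ dmax → G s ∈ Set.Icc (0 : ℝ) 1)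
    (hpix : (pix t).length = dmax) {d : ℕ} (hd : d ≤ dmax) :
    Qd dmax qt v pix G t dmax * ∏ j ∈ Finset.range d, Gnext dmax qt v pix G t ((pix t).take j)
      = Qd dmax qt v pix G t (dmax - d) * ∏ j ∈ Finset.range d, G ((pix t).take j) := by
  induction d with
  | zero => simp
  | succ d ih =>
    have hlen : ((pix t).take d).length = d := List.length_take_of_le (by omega)
    have hQ : Qd dmax qt v pix G t (dmax - d) ≠ 0 := (Qd_pos hq hG _).ne'
    rw [Finset.prod_range_succ, Finset.prod_range_succ, ← mul_assoc, ih (by omega),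
      Gnext_of_prefix (List.take_prefix _ _) (by omega), hlen,
      show dmax - d - 1 = dmax - (d + 1) by omega]
    field_simp

theorem one_sub_Gnext_mul_prod_inits (hq : ∀ s, 0 < qt t s (v t))
    (hG : ∀ s : List (Fin 4), s.length ≤ dmax → G s ∈ Set.Icc (0 : ℝ) 1)
    (hpix : (pix t).length = dmax) {d : ℕ} (hd : d ≤ dmax) :
    (1 - Gnext dmax qt v pix G t ((pix t).take d))
        * (((pix t).take d).inits.dropLast.map (Gnext dmax qt v pix G t)).prod
      = (qt t ((pix t).take d) (v t) / Qd dmax qt v pix G t dmax)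
          * ((1 - G ((pix t).take d)) * (((pix t).take d).inits.dropLast.map G).prod) := by
  have hdl : d ≤ (pix t).length := hpix ▸ hd
  have hlen : ((pix t).take d).length = d := List.length_take_of_le hdl
  rw [List.prod_map_dropLast_inits_take _ hdl, List.prod_map_dropLast_inits_take _ hdl,
    div_mul_eq_mul_div, eq_div_iff (Qd_pos hq hG dmax).ne']
  calc _ = (1 - Gnext dmax qt v pix G t ((pix t).take d))
        * (Qd dmax qt v pix G t dmax
          * ∏ j ∈ Finset.range d, Gnext dmax qt v pix G t ((pix t).take j)) := by ring
    _ = (1 - Gnext dmax qt v pix G t ((pix t).take d)) * Qd dmax qt v pix G t (dmax - d)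
          * ∏ j ∈ Finset.range d, G ((pix t).take j) := by
        rw [Qd_mul_prod_Gnext_take hq hG hpix hd, mul_assoc]
    _ = _ := by
        have key := one_sub_Gnext_mul_Qd hq hG (List.take_prefix d (pix t)) (hlen.trans_le hd)
        rw [hlen] at key
        rw [key]
        ring

end OneStep

theorem GT_mem_Icc {dmax : ℕ} {V : Type} {qt : ℕ → List (Fin 4) → V → ℝ} {v : ℕ → V}
    {pix : ℕ → List (Fin 4)} {g : List (Fin 4) → ℝ} (hq : ∀ t s, 0 < qt t s (v t))
    (hg : ∀ s : List (Fin 4), s.length ≤ dmax → g s ∈ Set.Icc (0 : ℝ) 1) (t : ℕ) :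
    ∀ s : List (Fin 4), s.length ≤ dmax → GT dmax qt v pix g t s ∈ Set.Icc (0 : ℝ) 1 := by
  induction t with
  | zero => exact hg
  | succ t ih => exact fun s hs => Gnext_mem_Icc (hq t) ih hs

/-- Blocks are encoded by their quadrant paths: the blocks on `S_k` are the prefixes
`(pix k).take d`, and `A_r` is `r.inits.dropLast`. -/
theorem stmt10_general (dmax : ℕ) (V : Type)
    (g : List (Fin 4) → ℝ)
    (hg : ∀ s : List (Fin 4), s.length ≤ dmax → g s ∈ Set.Icc (0 : ℝ) 1)
    (qt : ℕ → List (Fin 4) → V → ℝ)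
    (hqt : ∀ t s x, 0 < qt t s x)
    (v : ℕ → V) (pix : ℕ → List (Fin 4))
    (hpix : ∀ i, (pix i).length = dmax)
    (k : ℕ) (d : ℕ) (hd : d ≤ dmax) :
    (1 - GT dmax qt v pix g (k + 1) ((pix k).take d))
        * (((pix k).take d).inits.dropLast.map (GT dmax qt v pix g (k + 1))).prod
      = (qt k ((pix k).take d) (v k) / Qd dmax qt v pix (GT dmax qt v pix g k) k dmax)
          * ((1 - GT dmax qt v pix g k ((pix k).take d))
            * (((pix k).take d).inits.dropLast.map (GT dmax qt v pix g k)).prod) :=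
  one_sub_Gnext_mul_prod_inits (hqt k · (v k)) (GT_mem_Icc (fun t s => hqt t s (v t)) hg k)
    (hpix k) hd

/-- Blocks are encoded by their quadrant paths; the blocks on the path `S_k`
of blocks containing pixel `k` are the prefixes `r = (pix k).take d`, `d ≤ dmax`, of the
pixel path `pix k`, and the proper ancestors `A_r` of `r` are its proper prefixes
`r.inits.dropLast`.  With `g_{·|k} = GT ... g (k+1)`, `g_{·|k-1} = GT ... g k`,
`q̃(v_k | v^{k-1}, r) = qt k r (v k)` and
`q(v_k | v^{k-1}, s_λ) = Qd dmax qt v pix (GT ... g k) k dmax`, the one-step update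
satisfies
`(1 - g_{r|k}) ∏_{s ∈ A_r} g_{s|k}
  = (q̃(v_k | v^{k-1}, r) / q(v_k | v^{k-1}, s_λ)) (1 - g_{r|k-1}) ∏_{s ∈ A_r} g_{s|k-1}`,
both when `|r| = 1` (i.e. `d = dmax`) and when `|r| > 1` (i.e. `d < dmax`). -/
theorem stmt10 (dmax : ℕ) (V : Type) [Fintype V]
    (g : List (Fin 4) → ℝ)
    (hg : ∀ s : List (Fin 4), s.length ≤ dmax → g s ∈ Set.Icc (0 : ℝ) 1)
    (hg1 : ∀ s : List (Fin 4), s.length = dmax → g s = 0)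
    (qt : ℕ → List (Fin 4) → V → ℝ)
    (hqt : ∀ t s x, 0 < qt t s x)
    (hqts : ∀ t s, ∑ x : V, qt t s x = 1)
    (v : ℕ → V) (pix : ℕ → List (Fin 4))
    (hpix : ∀ i, (pix i).length = dmax)
    (hinj : ∀ i j, i < 4 ^ dmax → j < 4 ^ dmax → pix i = pix j → i = j)
    (k : ℕ) (hk : k < 4 ^ dmax) (d : ℕ) (hd : d ≤ dmax) :
    (1 - GT dmax qt v pix g (k + 1) ((pix k).take d))
        * (((pix k).take d).inits.dropLast.map (GT dmax qt v pix g (k + 1))).prod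
      = (qt k ((pix k).take d) (v k) / Qd dmax qt v pix (GT dmax qt v pix g k) k dmax)
          * ((1 - GT dmax qt v pix g k ((pix k).take d))
            * (((pix k).take d).inits.dropLast.map (GT dmax qt v pix g k)).prod) :=
  stmt10_general dmax V g hg qt hqt v pix hpix k d hd
end
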